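/- arXiv:math/0502107 — 2 statements merged into one kernel-verified Lean document; each statement's English description precedes it below -/
import Mathlib

section
/- Let g¹ and g² be finite sequences of nonnegative integers, let λ be a partition whose GJW sequence is the concatenation g¹ ++ (1) ++ g², and let λ′ be the partition whose GJW sequence is g¹ ++ (1, 0) ++ g². Then the rook posets P_λ and P_{λ′} are isomorphic as partially ordered sets. -/
namespace RookPoset

/-- A partition with `n` parts: `part i` is the (1-based) part `λ_{i+1}`.
The parts are weakly increasing and contain the staircase (`λ_i ≥ i`, 1-based),
which in particular makes them positive. -/
structure Partition (n : ℕ) where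
  part : Fin n → ℕ
  mono : Monotone part
  staircase : ∀ i : Fin n, (i : ℕ) + 1 ≤ part i

/-- The largest part; equals `λ_n` when `n > 0`. -/
def Partition.maxPart {n : ℕ} (lam : Partition n) : ℕ :=
  Finset.univ.sup lam.part

/-- The part `λ_k` in 1-based indexing, with the convention `λ_m = n + 1` for `m > n`. -/
def Partition.partAt {n : ℕ} (lam : Partition n) (k : ℕ) : ℕ :=
  if h : 1 ≤ k ∧ k ≤ n then lam.part ⟨k - 1, by omega⟩ else n + 1

/-- The GJW sequence `(λ_1 - 1, λ_2 - 2, …, λ_n - n)` of a partition. -/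
def Partition.gjw {n : ℕ} (lam : Partition n) : List ℕ :=
  (List.finRange n).map fun i => lam.part i - ((i : ℕ) + 1)

/-- A maximal rook placement on the Ferrers board of `lam`: `col i` is the (1-based)
column of the rook in the (1-based) row `i + 1` (rows indexed bottom-up). -/
structure Placement {n : ℕ} (lam : Partition n) where
  col : Fin n → ℕ
  inj : Function.Injective col
  pos : ∀ i, 1 ≤ col i
  le_part : ∀ i, col i ≤ lam.part i

/-- The increasingly sorted list of the values `x i` over indices `i` with `(i : ℕ) < j`,
i.e. the sorted initial segment `{x_1, …, x_j}` (1-based). -/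
def initSeg {n : ℕ} (x : Fin n → ℕ) (j : ℕ) : List ℕ :=
  ((Finset.univ.filter fun i : Fin n => (i : ℕ) < j).image x).sort (· ≤ ·)

/-- The rook poset order: `x ≤ y` iff each sorted initial segment of `x` is
componentwise at most the corresponding sorted initial segment of `y`. -/
def rle {n : ℕ} {lam : Partition n} (x y : Placement lam) : Prop :=
  ∀ j : ℕ, List.Forall₂ (· ≤ ·) (initSeg x.col j) (initSeg y.col j)

/-- `y` covers `x` in the rook poset. -/
def rcovers {n : ℕ} {lam : Partition n} (x y : Placement lam) : Prop :=
  rle x y ∧ x ≠ y ∧ ∀ z : Placement lam, rle x z → rle z y → z = x ∨ z = y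

/-- `y` covers `x` in the subposet induced on `S`. -/
def rcoversIn {n : ℕ} {lam : Partition n} (S : Set (Placement lam)) (x y : Placement lam) :
    Prop :=
  x ∈ S ∧ y ∈ S ∧ rle x y ∧ x ≠ y ∧ ∀ z ∈ S, rle x z → rle z y → z = x ∨ z = y

/-- `t` is the greedy placement `1̂`: for each row in turn (bottom-up), the rook is placed
in the largest column `≤ λ_i` not used by a lower row. -/
def IsGreedy {n : ℕ} {lam : Partition n} (t : Placement lam) : Prop :=
  ∀ i : Fin n, ∀ m : ℕ, 1 ≤ m → m ≤ lam.part i →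
    (∀ k : Fin n, k < i → t.col k ≠ m) → m ≤ t.col i

/-- `x` is obtained from `y` by the switch move on the rooks in rows `i < k`:
the rectangle spanned by the rooks at `(i, y.col i)` and `(k, y.col k)` contains no other rook,
and the two rooks exchange columns. -/
def SwitchMove {n : ℕ} {lam : Partition n} (y x : Placement lam) (i k : Fin n) : Prop :=
  i < k ∧ y.col k < y.col i ∧
  (∀ r : Fin n, i ≤ r → r ≤ k → y.col k ≤ y.col r → y.col r ≤ y.col i → r = i ∨ r = k) ∧
  x.col i = y.col k ∧ x.col k = y.col i ∧
  ∀ r : Fin n, r ≠ i → r ≠ k → x.col r = y.col r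

/-- `x` is obtained from `y` by a push move on the rook in row `i`: the rook moves to an
empty column `c` to its left such that every column strictly between `c` and its old column
contains a rook in a row below row `i`. -/
def PushMove {n : ℕ} {lam : Partition n} (y x : Placement lam) (i : Fin n) : Prop :=
  ∃ c : ℕ, 1 ≤ c ∧ c < y.col i ∧ (∀ r : Fin n, y.col r ≠ c) ∧
    (∀ d : ℕ, c < d → d < y.col i → ∃ r : Fin n, r < i ∧ y.col r = d) ∧
    x.col i = c ∧ ∀ r : Fin n, r ≠ i → x.col r = y.col r

/-- `x` is obtained from `y` by a single switch or push move on the rook in row `i`. -/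
def MoveOnRow {n : ℕ} {lam : Partition n} (y x : Placement lam) (i : Fin n) : Prop :=
  (∃ k : Fin n, SwitchMove y x i k) ∨ PushMove y x i

/-- Two coatoms `c, c'` of the rook poset (with top element `t`) are entangled:
there are two distinct elements each of which is covered by both `c` and `c'`
and lies below no other coatom. -/
def Entangled {n : ℕ} {lam : Partition n} (t c c' : Placement lam) : Prop :=
  ∃ z₁ z₂ : Placement lam, z₁ ≠ z₂ ∧
    (rcovers z₁ c ∧ rcovers z₁ c' ∧
      ∀ d : Placement lam, rcovers d t → d ≠ c → d ≠ c' → ¬ rle z₁ d) ∧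
    (rcovers z₂ c ∧ rcovers z₂ c' ∧
      ∀ d : Placement lam, rcovers d t → d ≠ c → d ≠ c' → ¬ rle z₂ d)

/-- `X_I`: the set of elements of the rook poset lying below no coatom outside `I`. -/
def Xset {n : ℕ} {lam : Partition n} (t : Placement lam) (I : Set (Placement lam)) :
    Set (Placement lam) :=
  {z : Placement lam | ∀ c' : Placement lam, rcovers c' t → c' ∉ I → ¬ rle z c'}

/-- The completed permutation `σ_x` of `{1, …, λ_n}` (as a function on 1-based positions):
position `i ≤ n` holds `x_i`, and the remaining positions hold the unused values in
increasing order (i.e. each subsequent position receives the smallest value not yet used). -/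
def Placement.sigma {n : ℕ} {lam : Partition n} (x : Placement lam) : ℕ → ℕ := fun a =>
  if h : 1 ≤ a ∧ a ≤ n then x.col ⟨a - 1, by omega⟩
  else ((Finset.Icc 1 lam.maxPart \ Finset.univ.image x.col).sort (· ≤ ·)).getD (a - n - 1) 0

/-- The rank `r(x)`: the number of inversions of the completed permutation `σ_x`. -/
def Placement.rank {n : ℕ} {lam : Partition n} (x : Placement lam) : ℕ :=
  ((Finset.Icc 1 lam.maxPart ×ˢ Finset.Icc 1 lam.maxPart).filter
    fun p => p.1 < p.2 ∧ x.sigma p.2 < x.sigma p.1).card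

/-- Break a list after every entry equal to `1`. -/
def breakAfterOnes : List ℕ → List (List ℕ)
  | [] => []
  | a :: rest =>
    if a = 1 then [a] :: breakAfterOnes rest
    else
      match breakAfterOnes rest with
      | [] => [[a]]
      | b :: bs => (a :: b) :: bs

/-- The multiset of blocks of a partition: break the GJW sequence after every entry
equal to `1` and delete all entries equal to `0` (discarding empty blocks). -/
def Partition.blocks {n : ℕ} (lam : Partition n) : Multiset (List ℕ) :=
  (((breakAfterOnes lam.gjw).map fun b => b.filter (· ≠ 0)).filter
    (· ≠ ([] : List ℕ)) : List (List ℕ))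

/-- The conjugate of a block `b = (g_1, …, g_k)` ending in `1`: it is the GJW sequence of the
conjugate partition `ν'` of the partition `ν` with `ν_i = g_i + i`, where
`ν'_i = k + 2 - min {m | ν_m ≥ k + 2 - i}` with the convention `ν_{k+1} = k + 1`. -/
noncomputable def conjBlock (b : List ℕ) : List ℕ :=
  let k := b.length
  let nu : ℕ → ℕ := fun m => if m ≤ k then b.getD (m - 1) 0 + m else k + 1
  (List.range k).map fun i0 =>
    let i := i0 + 1
    (k + 2 - sInf {m : ℕ | 1 ≤ m ∧ k + 2 - i ≤ nu m}) - i

/-- A block ends in `1`. -/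
def endsInOne (b : List ℕ) : Prop := b.getLast? = some 1

/-- Two blocks are equivalent when they are equal, or one ends in `1` and the other is its
conjugate block. -/
def BlockEquiv (b b' : List ℕ) : Prop :=
  b = b' ∨ (endsInOne b ∧ b' = conjBlock b) ∨ (endsInOne b' ∧ b = conjBlock b')

/-- Two partitions have matching block data: their multisets of blocks become equal after
replacing some blocks ending in `1` by their conjugate blocks. -/
def MatchingBlocks {n m : ℕ} (lam : Partition n) (mu : Partition m) : Prop :=
  Multiset.Rel BlockEquiv lam.blocks mu.blocks

/-- The rook posets of `lam` and `mu` are isomorphic as partially ordered sets. -/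
def RookIso {n m : ℕ} (lam : Partition n) (mu : Partition m) : Prop :=
  ∃ e : Placement lam ≃ Placement mu, ∀ a b : Placement lam, rle a b ↔ rle (e a) (e b)

/-- A function `τ`, viewed as a permutation of `{1, …, N}`, is `312`-avoiding. -/
def Avoids312 (N : ℕ) (τ : ℕ → ℕ) : Prop :=
  ∀ a b c : ℕ, 1 ≤ a → a < b → b < c → c ≤ N → ¬ (τ b < τ c ∧ τ c < τ a)

/-- A permutation of `Fin N` is `312`-avoiding. -/
def Avoids312P {N : ℕ} (τ : Equiv.Perm (Fin N)) : Prop :=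
  ∀ a b c : Fin N, a < b → b < c → ¬ (τ b < τ c ∧ τ c < τ a)

/-- The Bruhat order on permutations, characterized by componentwise dominance of the
increasingly sorted initial segments. -/
def bruhatLE {N : ℕ} (σ τ : Equiv.Perm (Fin N)) : Prop :=
  ∀ j : ℕ, List.Forall₂ (· ≤ ·)
    (initSeg (fun a : Fin N => (σ a : ℕ)) j) (initSeg (fun a : Fin N => (τ a : ℕ)) j)

end RookPoset

/-!
Let `q` be the (0-based) index of the inserted row: `λ'` arises from `λ` by inserting a row of
length `q + 1` at height `q` and a column `q + 2` in the rows above it, i.e. by inserting a `0`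
into the GJW sequence. In every placement on `λ'` the rows up to `q` fill exactly the columns
`1, …, q + 1`, while in a placement `x` on `λ` the rows below `q` fill all of them but one,
`c = missingCol q x.col`. The bijection gives the new row the column `c`, moves the rook that `x`
may have in column `c` (above row `q`) into the new column, and shifts the columns beyond `q + 1`
one step right.

The order is read off the counts `colCount x.col j t` of columns `≤ t` occupied below row `j`.
Those of the image of `x` are counts of `x` shifted by one in `j` and `t`, or equal to `t`.
The counts of `x` with `j > q` and `t ≤ q` are not seen this way: such a count is `t`, minus one
if `c ≤ t` is still free below row `j`. For two placements with missing columns `c` and `d`, the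
visible counts force `d ≤ c` and that `d` is free wherever `c` is, which settles the rest.
-/

open Finset

namespace List

theorem insertIdx_length_append {α : Type*} (l₁ l₂ : List α) (x : α) :
    (l₁ ++ l₂).insertIdx l₁.length x = l₁ ++ x :: l₂ := by
  induction l₁ with
  | nil => simp
  | cons a l ih => simp [insertIdx_succ_cons, ih]

section Sorted

variable {α : Type*} [LinearOrder α]

lemma countP_le_countP_of_forall₂ {a b : List α} (h : Forall₂ (· ≤ ·) a b) (t : α) :
    b.countP (· ≤ t) ≤ a.countP (· ≤ t) := by
  induction h with
  | nil => simp
  | cons hxy _ ih =>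
    simp only [countP_cons, decide_eq_true_eq]
    split_ifs with h₁ h₂ <;> first | omega | exact absurd (hxy.trans h₁) h₂

lemma countP_le_eq_zero {x t : α} {a : List α} (ha : ∀ v ∈ a, x ≤ v) (ht : t < x) :
    a.countP (· ≤ t) = 0 :=
  countP_eq_zero.mpr fun v hv => by simpa using ht.trans_le (ha v hv)

lemma forall₂_le_of_countP_le {a b : List α} (ha : a.Pairwise (· ≤ ·)) (hb : b.Pairwise (· ≤ ·))
    (hlen : a.length = b.length) (h : ∀ t, b.countP (· ≤ t) ≤ a.countP (· ≤ t)) :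
    Forall₂ (· ≤ ·) a b := by
  induction a generalizing b with
  | nil => cases b <;> simp_all
  | cons x a ih =>
    cases b with
    | nil => simp at hlen
    | cons y b =>
      rw [pairwise_cons] at ha hb
      have hxy : x ≤ y := by
        by_contra! hyx
        have := h y
        rw [countP_le_eq_zero (fun v hv => (mem_cons.mp hv).elim ge_of_eq (ha.1 v)) hyx,
          countP_cons] at this
        simp at this
      refine .cons hxy (ih ha.2 hb.2 (by simpa using hlen) fun t => ?_)
      by_cases hyt : y ≤ t
      · have := h t
        simp only [countP_cons, decide_eq_true_eq, if_pos hyt, if_pos (hxy.trans hyt)] at this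
        omega
      · rw [countP_le_eq_zero hb.1 (not_le.mp hyt)]
        exact Nat.zero_le _

end Sorted

end List

namespace Finset

variable {α : Type*} [LinearOrder α]

lemma countP_sort (s : Finset α) (t : α) :
    (s.sort (· ≤ ·)).countP (· ≤ t) = #{v ∈ s | v ≤ t} := by
  rw [← Multiset.coe_countP, sort_eq, Multiset.countP_eq_card_filter]
  rfl

theorem forall₂_sort_le_iff {s s' : Finset α} (h : #s = #s') :
    List.Forall₂ (· ≤ ·) (s.sort (· ≤ ·)) (s'.sort (· ≤ ·)) ↔
      ∀ t, #{v ∈ s' | v ≤ t} ≤ #{v ∈ s | v ≤ t} := by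
  simp only [← countP_sort]
  exact ⟨List.countP_le_countP_of_forall₂, List.forall₂_le_of_countP_le (pairwise_sort _ _)
    (pairwise_sort _ _) (by simpa using h)⟩

end Finset

namespace Fin

lemma val_succAbove {m : ℕ} (q : Fin (m + 1)) (i : Fin m) :
    (q.succAbove i : ℕ) = if (i : ℕ) < q then (i : ℕ) else i + 1 := by
  rcases lt_or_ge i.castSucc q with h | h
  · rw [succAbove_of_castSucc_lt _ _ h, if_pos (show (i : ℕ) < q from h), val_castSucc]
  · rw [succAbove_of_le_castSucc _ _ h, if_neg (show ¬ (i : ℕ) < q from not_lt.mpr h),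
      val_succ]

lemma insertNth_injective {α : Type*} {m : ℕ} {q : Fin (m + 1)} {a : α} {f : Fin m → α}
    (hf : Function.Injective f) (ha : ∀ i, f i ≠ a) :
    Function.Injective (q.insertNth a f) := by
  intro i j h
  induction i using succAboveCases q <;> induction j using succAboveCases q <;>
    simp only [insertNth_apply_same, insertNth_apply_succAbove] at h
  · rfl
  · exact absurd h.symm (ha _)
  · exact absurd h (ha _)
  · rw [hf h]

end Fin

namespace RookPoset

section Counting

variable {m : ℕ}

def colsBelow (f : Fin m → ℕ) (j : ℕ) : Finset ℕ := image f {i | (i : ℕ) < j}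

def colCount (f : Fin m → ℕ) (j t : ℕ) : ℕ := #{v ∈ colsBelow f j | v ≤ t}

@[simp]
lemma mem_colsBelow {f : Fin m → ℕ} {j v : ℕ} :
    v ∈ colsBelow f j ↔ ∃ i : Fin m, (i : ℕ) < j ∧ f i = v := by
  simp [colsBelow]

lemma card_colsBelow {f : Fin m → ℕ} (hf : Function.Injective f) (j : ℕ) :
    #(colsBelow f j) = min m j := by
  rw [colsBelow, card_image_of_injective _ hf, Fin.card_filter_val_lt]

theorem rle_iff_colCount {lam : Partition m} (x y : Placement lam) :
    rle x y ↔ ∀ j t, colCount y.col j t ≤ colCount x.col j t :=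
  forall_congr' fun j =>
    forall₂_sort_le_iff ((card_colsBelow x.inj j).trans (card_colsBelow y.inj j).symm)

lemma colsBelow_insertNth_of_le {q : Fin (m + 1)} (a : ℕ) (f : Fin m → ℕ) {j : ℕ}
    (hj : j ≤ q) : colsBelow (q.insertNth a f) j = colsBelow f j := by
  ext v
  simp only [mem_colsBelow, Fin.exists_iff_succAbove q, Fin.insertNth_apply_same,
    Fin.insertNth_apply_succAbove, Fin.val_succAbove]
  constructor
  · rintro (⟨hq, -⟩ | ⟨i, hi, rfl⟩)
    · omega
    · exact ⟨i, by split_ifs at hi <;> omega, rfl⟩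
  · rintro ⟨i, hi, rfl⟩
    exact .inr ⟨i, by split_ifs <;> omega, rfl⟩

lemma colsBelow_insertNth_succ {q : Fin (m + 1)} (a : ℕ) (f : Fin m → ℕ) {j : ℕ}
    (hj : q ≤ j) : colsBelow (q.insertNth a f) (j + 1) = insert a (colsBelow f j) := by
  ext v
  simp only [mem_colsBelow, Fin.exists_iff_succAbove q, Fin.insertNth_apply_same,
    Fin.insertNth_apply_succAbove, mem_insert, Fin.val_succAbove]
  constructor
  · rintro (⟨-, rfl⟩ | ⟨i, hi, rfl⟩)
    · exact .inl rfl
    · exact .inr ⟨i, by split_ifs at hi <;> omega, rfl⟩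
  · rintro (rfl | ⟨i, hi, rfl⟩)
    · exact .inl ⟨by omega, rfl⟩
    · exact .inr ⟨i, by split_ifs <;> omega, rfl⟩

end Counting

section Columns

variable {m : ℕ} {μ : Partition m}

lemma colsBelow_mono (f : Fin m → ℕ) {j j' : ℕ} (h : j ≤ j') : colsBelow f j ⊆ colsBelow f j' :=
  image_subset_image fun i hi => by simp only [mem_filter] at hi ⊢; exact ⟨hi.1, by omega⟩

lemma colsBelow_subset_Icc (x : Placement μ) {k b : ℕ}
    (hb : ∀ i : Fin m, (i : ℕ) < k → μ.part i ≤ b) : colsBelow x.col k ⊆ Icc 1 b := by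
  intro v hv
  obtain ⟨i, hi, rfl⟩ := mem_colsBelow.mp hv
  exact mem_Icc.mpr ⟨x.pos i, (x.le_part i).trans (hb i hi)⟩

lemma colCount_add_card_Icc_sdiff (x : Placement μ) (j t : ℕ) :
    colCount x.col j t + #(Icc 1 t \ colsBelow x.col j) = t := by
  have : {v ∈ colsBelow x.col j | v ≤ t} = Icc 1 t ∩ colsBelow x.col j := by
    ext v
    simp only [mem_filter, mem_inter, mem_Icc]
    constructor
    · rintro ⟨hv, hvt⟩
      obtain ⟨i, -, rfl⟩ := mem_colsBelow.mp hv
      exact ⟨⟨x.pos i, hvt⟩, hv⟩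
    · rintro ⟨⟨-, hvt⟩, hv⟩
      exact ⟨hv, hvt⟩
  rw [colCount, this, card_inter_add_card_sdiff, Nat.card_Icc, Nat.add_sub_cancel]

lemma colsBelow_eq_Icc_of_tight (x : Placement μ) {q : Fin m} (hq : μ.part q = q + 1) :
    colsBelow x.col (q + 1) = Icc 1 ((q : ℕ) + 1) := by
  refine eq_of_subset_of_card_le (colsBelow_subset_Icc x fun i hi => ?_) ?_
  · exact (μ.mono (Fin.le_def.mpr (by omega))).trans hq.le
  · rw [card_colsBelow x.inj, Nat.card_Icc]
    omega

lemma colCount_eq_of_tight (x : Placement μ) {q : Fin m} (hq : μ.part q = q + 1) {j t : ℕ}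
    (hj : q < j) (ht : t ≤ q + 1) : colCount x.col j t = t := by
  have : Icc 1 t \ colsBelow x.col j = ∅ := by
    rw [sdiff_eq_empty_iff_subset]
    calc Icc 1 t ⊆ Icc 1 ((q : ℕ) + 1) := Icc_subset_Icc_right ht
      _ = colsBelow x.col (q + 1) := (colsBelow_eq_Icc_of_tight x hq).symm
      _ ⊆ colsBelow x.col j := colsBelow_mono x.col hj
  simpa [this] using colCount_add_card_Icc_sdiff x j t

noncomputable def missingCol (k : ℕ) (f : Fin m → ℕ) : ℕ := sInf {v | 1 ≤ v ∧ v ∉ colsBelow f k}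

lemma Icc_sdiff_colsBelow (x : Placement μ) {k : ℕ} (hk : k ≤ m)
    (hb : ∀ i : Fin m, (i : ℕ) < k → μ.part i ≤ k + 1) :
    Icc 1 (k + 1) \ colsBelow x.col k = {missingCol k x.col} := by
  obtain ⟨c, hc⟩ : ∃ c, Icc 1 (k + 1) \ colsBelow x.col k = {c} := by
    rw [← card_eq_one, card_sdiff_of_subset (colsBelow_subset_Icc x hb), card_colsBelow x.inj,
      Nat.card_Icc]
    omega
  have hc_mem : c ∈ Icc 1 (k + 1) \ colsBelow x.col k := hc ▸ mem_singleton_self c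
  rw [mem_sdiff, mem_Icc] at hc_mem
  have hS : c ∈ {v | 1 ≤ v ∧ v ∉ colsBelow x.col k} := ⟨hc_mem.1.1, hc_mem.2⟩
  obtain ⟨h1, h2⟩ := Nat.sInf_mem ⟨c, hS⟩
  rw [hc, singleton_inj]
  exact (mem_singleton.mp (hc ▸ mem_sdiff.mpr
    ⟨mem_Icc.mpr ⟨h1, (Nat.sInf_le hS).trans hc_mem.1.2⟩, h2⟩)).symm

lemma missingCol_mem (x : Placement μ) {k : ℕ} (hk : k ≤ m)
    (hb : ∀ i : Fin m, (i : ℕ) < k → μ.part i ≤ k + 1) :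
    missingCol k x.col ∈ Icc 1 (k + 1) \ colsBelow x.col k :=
  Icc_sdiff_colsBelow x hk hb ▸ mem_singleton_self _

lemma eq_missingCol (x : Placement μ) {k : ℕ} (hk : k ≤ m)
    (hb : ∀ i : Fin m, (i : ℕ) < k → μ.part i ≤ k + 1) {v : ℕ}
    (hv : v ∈ Icc 1 (k + 1) \ colsBelow x.col k) : v = missingCol k x.col :=
  mem_singleton.mp (Icc_sdiff_colsBelow x hk hb ▸ hv)

lemma colCount_add_ite_missingCol (x : Placement μ) {k : ℕ} (hk : k ≤ m)
    (hb : ∀ i : Fin m, (i : ℕ) < k → μ.part i ≤ k + 1) {j t : ℕ} (hj : k ≤ j) (ht : t ≤ k + 1) :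
    colCount x.col j t +
      (if missingCol k x.col ≤ t ∧ missingCol k x.col ∉ colsBelow x.col j then 1 else 0) = t := by
  have : Icc 1 t \ colsBelow x.col j =
      {v ∈ ({missingCol k x.col} : Finset ℕ) | v ≤ t ∧ v ∉ colsBelow x.col j} := by
    ext v
    simp only [mem_sdiff, mem_Icc, mem_filter, mem_singleton]
    constructor
    · rintro ⟨⟨h1, hvt⟩, hv⟩
      refine ⟨eq_missingCol x hk hb ?_, hvt, hv⟩
      exact mem_sdiff.mpr ⟨mem_Icc.mpr ⟨h1, by omega⟩, fun h => hv (colsBelow_mono x.col hj h)⟩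
    · rintro ⟨rfl, hvt, hv⟩
      exact ⟨⟨(mem_Icc.mp (mem_sdiff.mp (missingCol_mem x hk hb)).1).1, hvt⟩, hv⟩
  have h := colCount_add_card_Icc_sdiff x j t
  rw [this, filter_singleton] at h
  split_ifs at h ⊢ <;> simpa using h

theorem colCount_le_of_le_off_corner (x y : Placement μ) {k : ℕ} (hk : k ≤ m)
    (hb : ∀ i : Fin m, (i : ℕ) < k → μ.part i ≤ k + 1)
    (h_low : ∀ j t, j ≤ k → colCount y.col j t ≤ colCount x.col j t)
    (h_wide : ∀ j t, k ≤ j → k + 1 ≤ t → colCount y.col j t ≤ colCount x.col j t)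
    (j t : ℕ) : colCount y.col j t ≤ colCount x.col j t := by
  rcases le_or_gt j k with hj | hj
  · exact h_low j t hj
  rcases le_or_gt (k + 1) t with ht | ht
  · exact h_wide j t hj.le ht
  obtain ⟨hc, hc_not⟩ := mem_sdiff.mp (missingCol_mem x hk hb)
  obtain ⟨hd, hd_not⟩ := mem_sdiff.mp (missingCol_mem y hk hb)
  set c := missingCol k x.col
  set d := missingCol k y.col
  rw [mem_Icc] at hc hd
  have hdc : d ≤ c := by
    have := h_low k c le_rfl
    have hx := colCount_add_ite_missingCol x hk hb le_rfl hc.2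
    have hy := colCount_add_ite_missingCol y hk hb le_rfl hc.2
    rw [if_pos ⟨le_rfl, hc_not⟩] at hx
    split_ifs at hy with h
    · exact h.1
    · omega
  have hfree : c ∉ colsBelow x.col j → d ∉ colsBelow y.col j := by
    intro hcx hdy
    have := h_wide j (k + 1) hj.le le_rfl
    have hx := colCount_add_ite_missingCol x hk hb hj.le le_rfl
    have hy := colCount_add_ite_missingCol y hk hb hj.le le_rfl
    rw [if_pos ⟨hc.2, hcx⟩] at hx
    rw [if_neg fun h => h.2 hdy] at hy
    omega
  have hx := colCount_add_ite_missingCol x hk hb hj.le ht.le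
  have hy := colCount_add_ite_missingCol y hk hb hj.le ht.le
  split_ifs at hx hy with h₁ h₂ h₂
  · omega
  · exact absurd ⟨hdc.trans h₁.1, hfree h₁.2⟩ h₂
  · omega
  · omega

end Columns

section Relabel

variable {k c d v w b t : ℕ}

def relabel (k c v : ℕ) : ℕ := if v = c then k + 2 else if v ≤ k + 1 then v else v + 1

def unrelabel (k d w : ℕ) : ℕ := if w = k + 2 then d else if w ≤ k + 1 then w else w - 1

lemma relabel_injective : Function.Injective (relabel k c) := by
  intro v v' h
  unfold relabel at h
  split_ifs at h <;> omega

lemma relabel_ne (hc : c ≤ k + 1) (v : ℕ) : relabel k c v ≠ c := by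
  unfold relabel
  split_ifs <;> omega

lemma relabel_of_ne (hv : v ≤ k + 1) (hvc : v ≠ c) : relabel k c v = v := by
  rw [relabel, if_neg hvc, if_pos hv]

lemma one_le_relabel (hv : 1 ≤ v) : 1 ≤ relabel k c v := by
  unfold relabel
  split_ifs <;> omega

lemma relabel_le_succ (hv : v ≤ b) (hb : k + 1 ≤ b) : relabel k c v ≤ b + 1 := by
  unfold relabel
  split_ifs <;> omega

lemma relabel_le_succ_iff (hc : c ≤ k + 1) (ht : k + 1 ≤ t) : relabel k c v ≤ t + 1 ↔ v ≤ t := by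
  unfold relabel
  split_ifs <;> omega

lemma unrelabel_relabel (hc : c ≤ k + 1) (v : ℕ) : unrelabel k c (relabel k c v) = v := by
  unfold relabel unrelabel
  split_ifs <;> omega

lemma relabel_unrelabel (hd : d ≤ k + 1) (hw : w ≠ d) : relabel k d (unrelabel k d w) = w := by
  unfold relabel unrelabel
  split_ifs <;> omega

lemma unrelabel_injOn (hd : d ≤ k + 1) : Set.InjOn (unrelabel k d) {w | w ≠ d} := by
  intro w (hw : w ≠ d) w' (hw' : w' ≠ d) h
  unfold unrelabel at h
  split_ifs at h <;> omega

lemma one_le_unrelabel (hd : 1 ≤ d) (hw : 1 ≤ w) : 1 ≤ unrelabel k d w := by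
  unfold unrelabel
  split_ifs <;> omega

lemma unrelabel_le (hd : d ≤ k + 1) (hw : w ≤ b + 1) (hb : k + 1 ≤ b) : unrelabel k d w ≤ b := by
  unfold unrelabel
  split_ifs <;> omega

lemma unrelabel_of_le (hw : w ≤ k + 1) : unrelabel k d w = w := by
  rw [unrelabel, if_neg (by omega), if_pos hw]

end Relabel

@[ext]
lemma Placement.ext {m : ℕ} {μ : Partition m} {x y : Placement μ} (h : x.col = y.col) : x = y := by
  cases x; cases y; cases h; rfl

noncomputable def addRowCol {n : ℕ} (q : Fin (n + 1)) (f : Fin n → ℕ) : Fin (n + 1) → ℕ :=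
  q.insertNth (missingCol q f) (relabel q (missingCol q f) ∘ f)

def removeRowCol {n : ℕ} (q : Fin (n + 1)) (g : Fin (n + 1) → ℕ) : Fin n → ℕ :=
  unrelabel q (g q) ∘ q.removeNth g

section TightRow

variable {n : ℕ} {lam : Partition n} {lam' : Partition (n + 1)} {q : Fin (n + 1)}
  (h_tight : lam'.part q = q + 1)
  (h_rows : ∀ i : Fin n,
    lam'.part (q.succAbove i) = if (i : ℕ) < q then lam.part i else lam.part i + 1)

include h_tight h_rows in
lemma part_le_of_lt_tight (i : Fin n) (hi : (i : ℕ) < q) : lam.part i ≤ q + 1 := by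
  have h := h_rows i
  rw [if_pos hi] at h
  rw [← h, ← h_tight]
  exact lam'.mono ((Fin.succAbove_lt_iff_castSucc_lt q i).mpr hi).le

include h_tight h_rows in
lemma missingCol_mem_tight (x : Placement lam) :
    missingCol q x.col ∈ Icc 1 ((q : ℕ) + 1) \ colsBelow x.col q :=
  missingCol_mem x q.is_le (part_le_of_lt_tight h_tight h_rows)

noncomputable def Placement.addRow (x : Placement lam) : Placement lam' where
  col := addRowCol q x.col
  inj := by
    obtain ⟨hc, -⟩ := mem_sdiff.mp (missingCol_mem_tight h_tight h_rows x)
    exact Fin.insertNth_injective (relabel_injective.comp x.inj) fun i =>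
      relabel_ne (mem_Icc.mp hc).2 _
  pos := by
    obtain ⟨hc, -⟩ := mem_sdiff.mp (missingCol_mem_tight h_tight h_rows x)
    refine (Fin.forall_iff_succAbove q).mpr ⟨?_, fun i => ?_⟩
    · rw [addRowCol, Fin.insertNth_apply_same]
      exact (mem_Icc.mp hc).1
    · rw [addRowCol, Fin.insertNth_apply_succAbove]
      exact one_le_relabel (x.pos i)
  le_part := by
    obtain ⟨hc, hcx⟩ := mem_sdiff.mp (missingCol_mem_tight h_tight h_rows x)
    refine (Fin.forall_iff_succAbove q).mpr ⟨?_, fun i => ?_⟩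
    · rw [addRowCol, Fin.insertNth_apply_same, h_tight]
      exact (mem_Icc.mp hc).2
    · rw [addRowCol, Fin.insertNth_apply_succAbove, h_rows i, Function.comp_apply]
      split_ifs with hi
      · rw [relabel_of_ne ((x.le_part i).trans (part_le_of_lt_tight h_tight h_rows i hi))
          fun h => hcx (mem_colsBelow.mpr ⟨i, hi, h⟩)]
        exact x.le_part i
      · exact relabel_le_succ (x.le_part i) (by have := lam.staircase i; omega)

include h_tight in
lemma col_le_of_le_tight (y : Placement lam') {j : Fin (n + 1)} (hj : j ≤ q) :
    y.col j ≤ q + 1 :=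
  h_tight ▸ (y.le_part j).trans (lam'.mono hj)

lemma addRow_col (x : Placement lam) : (x.addRow h_tight h_rows).col = addRowCol q x.col := rfl

noncomputable def Placement.removeRow (y : Placement lam') : Placement lam where
  col := removeRowCol q y.col
  inj i j h := by
    have hne (i : Fin n) : y.col (q.succAbove i) ≠ y.col q := y.inj.ne (Fin.succAbove_ne q i)
    exact Fin.succAbove_right_injective
      (y.inj (unrelabel_injOn (col_le_of_le_tight h_tight y le_rfl) (hne i) (hne j) h))
  pos i := one_le_unrelabel (y.pos q) (y.pos _)
  le_part i := by
    have h := y.le_part (q.succAbove i)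
    rw [h_rows i] at h
    split_ifs at h with hi
    · rw [removeRowCol, Function.comp_apply, unrelabel_of_le]
      · exact h
      · exact col_le_of_le_tight h_tight y ((Fin.succAbove_lt_iff_castSucc_lt q i).mpr hi).le
    · exact unrelabel_le (col_le_of_le_tight h_tight y le_rfl) h
        (by have := lam.staircase i; omega)

lemma removeRow_addRow (x : Placement lam) :
    (x.addRow h_tight h_rows).removeRow h_tight h_rows = x := by
  obtain ⟨hc, -⟩ := mem_sdiff.mp (missingCol_mem_tight h_tight h_rows x)
  ext1
  funext i
  simp only [Placement.removeRow, Placement.addRow, removeRowCol, addRowCol,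
    Fin.insertNth_apply_same, Fin.removeNth_insertNth, Function.comp_apply]
  exact unrelabel_relabel (mem_Icc.mp hc).2 _

include h_rows in
lemma missingCol_removeRow (y : Placement lam') :
    missingCol q (y.removeRow h_tight h_rows).col = y.col q := by
  refine (eq_missingCol _ q.is_le (part_le_of_lt_tight h_tight h_rows)
    (mem_sdiff.mpr ⟨mem_Icc.mpr ⟨y.pos q, col_le_of_le_tight h_tight y le_rfl⟩, ?_⟩)).symm
  intro hmem
  obtain ⟨i, hi, h⟩ := mem_colsBelow.mp hmem
  have hle := col_le_of_le_tight h_tight y ((Fin.succAbove_lt_iff_castSucc_lt q i).mpr hi).le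
  change unrelabel q (y.col q) (y.col (q.succAbove i)) = y.col q at h
  rw [unrelabel_of_le hle] at h
  exact Fin.succAbove_ne q i (y.inj h)

lemma addRow_removeRow (y : Placement lam') :
    (y.removeRow h_tight h_rows).addRow h_tight h_rows = y := by
  ext1
  show addRowCol q (y.removeRow h_tight h_rows).col = y.col
  have hd := col_le_of_le_tight h_tight y le_rfl
  rw [addRowCol, missingCol_removeRow h_tight h_rows y]
  conv_rhs => rw [← Fin.insertNth_self_removeNth q y.col]
  congr 1
  funext i
  exact relabel_unrelabel hd (y.inj.ne (Fin.succAbove_ne q i))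

lemma colCount_addRow_of_le (x : Placement lam) {j : ℕ} (hj : j ≤ q) (t : ℕ) :
    colCount (x.addRow h_tight h_rows).col j t = colCount x.col j t := by
  obtain ⟨-, hcx⟩ := mem_sdiff.mp (missingCol_mem_tight h_tight h_rows x)
  have : colsBelow (x.addRow h_tight h_rows).col j = colsBelow x.col j := by
    rw [addRow_col, addRowCol, colsBelow_insertNth_of_le _ _ hj]
    ext v
    simp only [mem_colsBelow, Function.comp_apply]
    refine exists_congr fun i => and_congr_right fun hi => ?_
    rw [relabel_of_ne ((x.le_part i).trans (part_le_of_lt_tight h_tight h_rows i (by omega)))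
      fun h => hcx (mem_colsBelow.mpr ⟨i, by omega, h⟩)]
  rw [colCount, colCount, this]

lemma colCount_addRow_succ_succ (x : Placement lam) {j t : ℕ} (hj : q ≤ j) (ht : q + 1 ≤ t) :
    colCount (x.addRow h_tight h_rows).col (j + 1) (t + 1) = colCount x.col j t + 1 := by
  obtain ⟨hc, -⟩ := mem_sdiff.mp (missingCol_mem_tight h_tight h_rows x)
  rw [mem_Icc] at hc
  have himage : colsBelow (relabel q (missingCol q x.col) ∘ x.col) j =
      (colsBelow x.col j).image (relabel q (missingCol q x.col)) := by
    simp only [colsBelow, image_image]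
  rw [colCount, addRow_col, addRowCol, colsBelow_insertNth_succ _ _ hj, himage, filter_insert, if_pos (by omega), card_insert_of_notMem, filter_image,
    card_image_of_injective _ relabel_injective]
  · simp only [relabel_le_succ_iff hc.2 ht, colCount]
  · rw [mem_filter, mem_image]
    rintro ⟨⟨v, -, hv⟩, -⟩
    exact relabel_ne hc.2 v hv

theorem rle_iff_rle_addRow (x y : Placement lam) :
    rle x y ↔ rle (x.addRow h_tight h_rows) (y.addRow h_tight h_rows) := by
  rw [rle_iff_colCount, rle_iff_colCount]
  constructor
  · intro h J T
    rcases le_or_gt J q with hJ | hJ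
    · rw [colCount_addRow_of_le _ _ _ hJ, colCount_addRow_of_le _ _ _ hJ]
      exact h J T
    obtain ⟨j, rfl⟩ : ∃ j, J = j + 1 := ⟨J - 1, by omega⟩
    rcases le_or_gt T (q + 1) with hT | hT
    · rw [colCount_eq_of_tight _ h_tight hJ hT, colCount_eq_of_tight _ h_tight hJ hT]
    obtain ⟨t, rfl⟩ : ∃ t, T = t + 1 := ⟨T - 1, by omega⟩
    rw [colCount_addRow_succ_succ _ _ _ (by omega) (by omega),
      colCount_addRow_succ_succ _ _ _ (by omega) (by omega)]
    exact Nat.add_le_add_right (h j t) 1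
  · intro h
    refine colCount_le_of_le_off_corner x y q.is_le
      (part_le_of_lt_tight h_tight h_rows) (fun j t hj => ?_) (fun j t hj ht => ?_)
    · simpa only [colCount_addRow_of_le h_tight h_rows _ hj] using h j t
    · simpa only [colCount_addRow_succ_succ h_tight h_rows _ hj ht, Nat.add_le_add_iff_right]
        using h (j + 1) (t + 1)

include h_tight h_rows in
theorem rookIso_of_tight_row : RookIso lam lam' :=
  ⟨⟨Placement.addRow h_tight h_rows, Placement.removeRow h_tight h_rows,
    removeRow_addRow h_tight h_rows, addRow_removeRow h_tight h_rows⟩,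
    rle_iff_rle_addRow h_tight h_rows⟩

end TightRow

lemma Partition.length_gjw {n : ℕ} (lam : Partition n) : lam.gjw.length = n := by
  simp [Partition.gjw]

lemma Partition.getElem?_gjw {n : ℕ} (lam : Partition n) (i : Fin n) :
    lam.gjw[(i : ℕ)]? = some (lam.part i - (i + 1)) := by
  simp [Partition.gjw]

theorem rookIso_of_gjw_eq_insertIdx_zero {n : ℕ} {lam : Partition n} {lam' : Partition (n + 1)}
    (q : Fin (n + 1)) (h : lam'.gjw = lam.gjw.insertIdx q 0) : RookIso lam lam' := by
  refine rookIso_of_tight_row (q := q) ?_ fun i => ?_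
  · have hq := congrArg (·[(q : ℕ)]?) h
    simp only [Partition.getElem?_gjw, List.getElem?_insertIdx_self, Partition.length_gjw,
      if_pos q.is_le, Option.some.injEq] at hq
    have := lam'.staircase q
    omega
  · have hi := congrArg (·[(q.succAbove i : ℕ)]?) h
    have := lam.staircase i
    have := lam'.staircase (q.succAbove i)
    simp only [Partition.getElem?_gjw] at hi
    rw [Fin.val_succAbove] at hi this
    split_ifs at hi this ⊢ with hiq
    · rw [List.getElem?_insertIdx_of_lt hiq, Partition.getElem?_gjw, Option.some.injEq] at hi
      omega
    · rw [List.getElem?_insertIdx_of_gt (by omega), Nat.add_sub_cancel, Partition.getElem?_gjw,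
        Option.some.injEq] at hi
      omega

/-- If the GJW sequence of `λ` is `g¹ ++ (1) ++ g²` and that of `λ'` is
`g¹ ++ (1, 0) ++ g²`, then the rook posets of `λ` and `λ'` are isomorphic. -/
theorem rookIso_insert_zero_after_one {n n' : ℕ} (lam : Partition n) (lam' : Partition n')
    (g1 g2 : List ℕ) (h : lam.gjw = g1 ++ [1] ++ g2) (h' : lam'.gjw = g1 ++ [1, 0] ++ g2) :
    RookIso lam lam' := by
  have hlen := congrArg List.length h
  have hlen' := congrArg List.length h'
  simp only [Partition.length_gjw, List.length_append, List.length_cons] at hlen hlen'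
  obtain rfl : n' = n + 1 := by omega
  refine rookIso_of_gjw_eq_insertIdx_zero ⟨g1.length + 1, by omega⟩ ?_
  have := List.insertIdx_length_append (g1 ++ [1]) g2 0
  rw [List.length_append, List.length_singleton] at this
  rw [h, h', this]
  simp

end RookPoset
end

section
/- Let λ be a partition and 1̂ the maximum of P_λ. For every row i with λ_i > i, there is exactly one element of P_λ obtained from 1̂ by performing a single switch move or a single push move on the rook in row i, and this element is a coatom of P_λ; for rows i with λ_i = i no switch or push move on the rook in row i of 1̂ is possible; and the resulting map from {i : λ_i > i} to the set of coatoms of P_λ is a bijection. -/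
namespace RookPoset

/-!
Placements are compared through `prefixCount x j q`, the number of rooks among the first `j` rows
lying in columns `≥ q`: `x ≤ y` iff every such count of `x` is at most that of `y`.

Fix a row `i` of the greedy placement `t` with `λ_i > i` and let `d` be the largest column left of
`t_i` used by no lower row (greediness and counting make it exist). Exchanging the columns `d` and
`t_i` is the only switch or push move on row `i`: a switch with the row using `d` if there is one,
a push otherwise. It lowers the counts by exactly one on a box of cells `(j, q)` and leaves all
others unchanged. An element squeezed between this placement and `t` has the counts of `t` outside
the box, which pins every rook except those in columns `d` and `t_i`, so it is one of the two. Any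
`x < t` whose lowest row differing from `t` is `i` lies below it, hence every coatom is the one
attached to its lowest row differing from `t`. When `λ_i = i`, the lower rows fill every column
`≤ λ_i` other than `t_i`, so no move on row `i` exists.
-/

open Finset Function

variable {n : ℕ} {lam : Partition n}

theorem Placement.ext_col {x y : Placement lam} (h : x.col = y.col) : x = y := by
  cases x; cases y; cases h; rfl

def prefixCount (x : Fin n → ℕ) (j q : ℕ) : ℕ := #{r : Fin n | (r : ℕ) < j ∧ q ≤ x r}

theorem prefixCount_succ (x : Fin n → ℕ) (r : Fin n) (q : ℕ) :
    prefixCount x (r + 1) q = prefixCount x r q + if q ≤ x r then 1 else 0 := by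
  have hsplit : univ.filter (fun s : Fin n => (s : ℕ) < r + 1 ∧ q ≤ x s) =
      univ.filter (fun s : Fin n => (s : ℕ) < r ∧ q ≤ x s) ∪
        univ.filter (fun s => s = r ∧ q ≤ x s) := by
    ext s; simp only [mem_filter, mem_union, mem_univ, true_and, ← Fin.val_inj]; omega
  rw [prefixCount, prefixCount, hsplit, card_union_of_disjoint]
  · congr 1
    split_ifs with h
    · exact card_eq_one.mpr ⟨r, by ext s; constructor <;> simp_all⟩
    · simpa using h
  · rw [disjoint_filter]; rintro s - ⟨h, -⟩ ⟨rfl, -⟩; simp at h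

theorem prefixCount_congr {x y : Fin n → ℕ} {j : ℕ}
    (h : ∀ r : Fin n, (r : ℕ) < j → x r = y r) (q : ℕ) :
    prefixCount x j q = prefixCount y j q := by
  unfold prefixCount
  congr 1
  exact filter_congr fun r _ => and_congr_right fun hr => by rw [h r hr]

theorem le_col_iff_of_prefixCount_eq {x y : Fin n → ℕ} {r : Fin n} {q : ℕ}
    (h₀ : prefixCount x r q = prefixCount y r q)
    (h₁ : prefixCount x (r + 1) q = prefixCount y (r + 1) q) : q ≤ x r ↔ q ≤ y r := by
  rw [prefixCount_succ, prefixCount_succ, h₀] at h₁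
  constructor <;> intro <;> split_ifs at h₁ <;> omega

theorem col_eq_of_prefixCount_eq {x y : Fin n → ℕ} {r : Fin n}
    (h : ∀ j q, (r : ℕ) ≤ j → j ≤ r + 1 → y r ≤ q → q ≤ y r + 1 →
      prefixCount x j q = prefixCount y j q) : x r = y r := by
  have h₁ := le_col_iff_of_prefixCount_eq (h _ _ le_rfl (by omega) le_rfl (by omega))
    (h _ _ (by omega) le_rfl le_rfl (by omega))
  have h₂ := le_col_iff_of_prefixCount_eq (h _ _ le_rfl (by omega) (by omega) le_rfl)
    (h _ _ (by omega) le_rfl (by omega) le_rfl)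
  omega

theorem countP_le_countP_of_forall₂ {la lb : List ℕ} (h : List.Forall₂ (· ≤ ·) la lb)
    (q : ℕ) :
    la.countP (q ≤ ·) ≤ lb.countP (q ≤ ·) := by
  induction h with
  | nil => simp
  | cons hab _ ih =>
    simp only [List.countP_cons, decide_eq_true_eq]
    split_ifs <;> omega

theorem forall₂_le_iff_countP_le {la lb : List ℕ} (hlen : la.length = lb.length)
    (ha : la.Pairwise (· ≤ ·)) (hb : lb.Pairwise (· ≤ ·)) :
    List.Forall₂ (· ≤ ·) la lb ↔ ∀ q, la.countP (q ≤ ·) ≤ lb.countP (q ≤ ·) := by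
  refine ⟨countP_le_countP_of_forall₂, fun h => ?_⟩
  induction la generalizing lb with
  | nil => cases lb <;> simp_all
  | cons a as ih =>
    obtain _ | ⟨b, bs⟩ := lb
    · simp at hlen
    rw [List.pairwise_cons] at ha hb
    simp only [List.length_cons, Nat.add_right_cancel_iff] at hlen
    have hall {l : List ℕ} {q : ℕ} (hl : ∀ v ∈ l, q ≤ v) :
        l.countP (q ≤ ·) = l.length :=
      List.countP_eq_length.mpr (by simpa using hl)
    have hab : a ≤ b := by
      by_contra! hba
      have := h a
      rw [hall (by simpa using ha.1), List.countP_cons_of_neg (by simpa using hba)] at this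
      have := List.countP_le_length (p := (a ≤ ·)) (l := bs)
      simp only [List.length_cons] at *
      omega
    refine .cons hab (ih hlen ha.2 hb.2 fun q => ?_)
    have hq := h q
    simp only [List.countP_cons, decide_eq_true_eq] at hq
    by_cases hqb : q ≤ b
    · by_cases hqa : q ≤ a
      · simpa [hqa, hqb] using hq
      · rw [hall fun v hv => hqb.trans (hb.1 v hv), ← hlen]
        exact List.countP_le_length
    · simpa [hqb, show ¬ q ≤ a by omega] using hq

theorem countP_initSeg {x : Fin n → ℕ} (hx : Injective x) (j q : ℕ) :
    (initSeg x j).countP (q ≤ ·) = prefixCount x j q := by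
  rw [initSeg, List.countP_eq_length_filter, ← List.toFinset_card_of_nodup, List.toFinset_filter,
    sort_toFinset, filter_image, card_image_of_injective _ hx, filter_filter]
  · simp [prefixCount]
  · exact (sort_nodup _ _).filter _

theorem length_initSeg {x : Fin n → ℕ} (hx : Injective x) (j : ℕ) :
    (initSeg x j).length = #{i : Fin n | (i : ℕ) < j} := by
  rw [initSeg, length_sort, card_image_of_injective _ hx]

theorem rle_iff_prefixCount_le {x y : Placement lam} :
    rle x y ↔ ∀ j q, prefixCount x.col j q ≤ prefixCount y.col j q := by
  have hsorted (z : Fin n → ℕ) (j : ℕ) : (initSeg z j).Pairwise (· ≤ ·) :=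
    pairwise_sort _ _
  refine forall_congr' fun j => ?_
  rw [forall₂_le_iff_countP_le (by rw [length_initSeg x.inj, length_initSeg y.inj])
    (hsorted _ j) (hsorted _ j)]
  simp only [countP_initSeg x.inj, countP_initSeg y.inj]

theorem card_rows_eq_ite {x : Fin n → ℕ} (hx : Injective x) (j v : ℕ) :
    #{r : Fin n | (r : ℕ) < j ∧ x r = v} =
      if ∃ r : Fin n, (r : ℕ) < j ∧ x r = v then 1 else 0 := by
  split_ifs with h
  · obtain ⟨r, hr, rfl⟩ := h
    refine card_eq_one.mpr ⟨r, ?_⟩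
    ext s
    simp only [mem_filter, mem_univ, true_and, mem_singleton]
    exact ⟨fun hs => hx hs.2, by rintro rfl; exact ⟨hr, rfl⟩⟩
  · simpa [filter_eq_empty_iff] using h

theorem prefixCount_swap_comp {x : Fin n → ℕ} (hx : Injective x) {a b : ℕ} (hab : a < b)
    (j q : ℕ) :
    prefixCount (Equiv.swap a b ∘ x) j q +
        (if (∃ r : Fin n, (r : ℕ) < j ∧ x r = b) ∧ a < q ∧ q ≤ b then 1 else 0) =
      prefixCount x j q +
        if (∃ r : Fin n, (r : ℕ) < j ∧ x r = a) ∧ a < q ∧ q ≤ b then 1 else 0 := by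
  by_cases hq : a < q ∧ q ≤ b
  · simp only [hq, and_true, ← card_rows_eq_ite hx, prefixCount, card_filter,
      ← sum_add_distrib]
    refine sum_congr rfl fun r _ => ?_
    rw [comp_apply, Equiv.swap_apply_def]
    split_ifs <;> omega
  · simp only [hq, and_false, if_false, add_zero, prefixCount]
    congr 1
    refine filter_congr fun r _ => and_congr_right fun _ => ?_
    rw [comp_apply, Equiv.swap_apply_def]
    split_ifs <;> omega

theorem col_le_of_rle {x y : Placement lam} (h : rle x y) {i : Fin n}
    (hlow : ∀ r < i, x.col r = y.col r) : x.col i ≤ y.col i := by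
  have hcount := (rle_iff_prefixCount_le.mp h) (i + 1) (x.col i)
  rw [prefixCount_succ, prefixCount_succ, prefixCount_congr (fun r hr => hlow r hr)] at hcount
  split_ifs at hcount with hxy <;> simp_all

theorem exists_first_col_ne {x y : Placement lam} (h : x ≠ y) :
    ∃ i, x.col i ≠ y.col i ∧ ∀ r < i, x.col r = y.col r := by
  have hne : (univ.filter fun r => x.col r ≠ y.col r).Nonempty := by
    by_contra hempty
    refine h (Placement.ext_col (funext fun r => ?_))
    by_contra hr
    exact hempty ⟨r, by simpa using hr⟩
  obtain ⟨i, hi, hmin⟩ := exists_min_image _ id hne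
  refine ⟨i, (mem_filter.mp hi).2, fun r hr => ?_⟩
  by_contra hxr
  exact absurd (hmin r (by simpa using hxr)) (not_le.mpr hr)

def FreeBelow (x : Placement lam) (i : Fin n) (m : ℕ) : Prop :=
  ∀ r < i, x.col r ≠ m

instance (x : Placement lam) (i : Fin n) : DecidablePred (FreeBelow x i) :=
  fun m => inferInstanceAs (Decidable (∀ r < i, x.col r ≠ m))

section Greedy

variable {t : Placement lam} {i : Fin n}

theorem IsGreedy.exists_lt_col_eq (ht : IsGreedy t) {m : ℕ} (h₁ : t.col i < m)
    (h₂ : m ≤ lam.part i) : ∃ r < i, t.col r = m := by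
  by_contra! h
  have := ht i m (by have := t.pos i; omega) h₂ h
  omega

theorem exists_freeBelow_iff (ht : IsGreedy t) (i : Fin n) :
    (∃ m, 1 ≤ m ∧ m < t.col i ∧ FreeBelow t i m) ↔ (i : ℕ) + 1 < lam.part i := by
  set B := (univ.filter (· < i)).image t.col
  set C := (Icc 1 (lam.part i)).erase (t.col i)
  have hB : #B = i := by
    rw [card_image_of_injective _ t.inj, filter_gt_eq_Iio, Fin.card_Iio]
  have hC : #C = lam.part i - 1 := by
    rw [card_erase_of_mem (mem_Icc.mpr ⟨t.pos i, t.le_part i⟩), Nat.card_Icc,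
      Nat.add_sub_cancel]
  have hBC : B ⊆ C := by
    simp only [B, C, subset_iff, mem_image, mem_filter, mem_univ, true_and, mem_erase, mem_Icc]
    rintro _ ⟨r, hr, rfl⟩
    exact ⟨fun h => hr.ne (t.inj h), t.pos r, (t.le_part r).trans (lam.mono hr.le)⟩
  constructor
  · rintro ⟨m, hm₁, hm, hfree⟩
    have hsub : B ⊆ C.erase m := fun v hv => by
      have hv' := hv
      simp only [B, mem_image, mem_filter, mem_univ, true_and] at hv'
      obtain ⟨r, hr, rfl⟩ := hv'
      exact mem_erase.mpr ⟨hfree r hr, hBC hv⟩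
    have := t.le_part i
    have hcard := card_le_card hsub
    rw [card_erase_of_mem (by simp [C]; omega), hC, hB] at hcard
    omega
  · intro hi
    obtain ⟨m, hmC, hmB⟩ := exists_mem_notMem_of_card_lt_card (s := B) (t := C) (by omega)
    simp only [C, mem_erase, mem_Icc] at hmC
    have hfree : FreeBelow t i m := fun r hr he =>
      hmB (mem_image.mpr ⟨r, by simpa using hr, he⟩)
    refine ⟨m, hmC.2.1, lt_of_le_of_ne (not_lt.mp fun hlt => ?_) hmC.1, hfree⟩
    obtain ⟨r, hr, he⟩ := ht.exists_lt_col_eq hlt hmC.2.2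
    exact hfree r hr he

theorem not_moveOnRow (ht : IsGreedy t) (hi : lam.part i = (i : ℕ) + 1) {x : Placement lam} :
    ¬ MoveOnRow t x i := by
  intro hx
  suffices ∃ m, 1 ≤ m ∧ m < t.col i ∧ FreeBelow t i m by
    have := (exists_freeBelow_iff ht i).mp this
    omega
  rcases hx with ⟨k, hik, hki, -⟩ | ⟨m, hm₁, hm, hmfree, -⟩
  · exact ⟨t.col k, t.pos k, hki, fun r hr he => (hr.trans hik).ne (t.inj he)⟩
  · exact ⟨m, hm₁, hm, fun r _ => hmfree r⟩

/-- The column to which the move on row `i` of `1̂` sends its rook (`0` when there is none). -/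
def gapCol (t : Placement lam) (i : Fin n) : ℕ :=
  Nat.findGreatest (FreeBelow t i) (t.col i - 1)

theorem gapCol_spec (ht : IsGreedy t) (hi : (i : ℕ) + 1 < lam.part i) :
    1 ≤ gapCol t i ∧ gapCol t i < t.col i ∧ FreeBelow t i (gapCol t i) := by
  obtain ⟨m, hm₁, hm, hfree⟩ := (exists_freeBelow_iff ht i).mpr hi
  have hle : m ≤ t.col i - 1 := by omega
  exact ⟨hm₁.trans (Nat.le_findGreatest hle hfree),
    (Nat.findGreatest_le _).trans_lt (by omega), Nat.findGreatest_spec hle hfree⟩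

theorem le_gapCol {m : ℕ} (hfree : FreeBelow t i m) (hm : m < t.col i) : m ≤ gapCol t i :=
  Nat.le_findGreatest (by omega) hfree

theorem IsGreedy.exists_lt_col_eq_of_gapCol_lt (ht : IsGreedy t) {m : ℕ} (h₁ : gapCol t i < m)
    (h₂ : m ≤ lam.part i) (h₃ : m ≠ t.col i) : ∃ r < i, t.col r = m := by
  rcases lt_or_gt_of_ne h₃ with hlt | hgt
  · have := Nat.findGreatest_is_greatest h₁ (by omega)
    simpa [FreeBelow] using this
  · exact ht.exists_lt_col_eq hgt h₂

theorem lt_of_col_eq_gapCol (ht : IsGreedy t) (hi : (i : ℕ) + 1 < lam.part i) {k : Fin n}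
    (hk : t.col k = gapCol t i) : i < k := by
  obtain ⟨-, hd, hfree⟩ := gapCol_spec ht hi
  rcases lt_trichotomy k i with hki | rfl | hik
  · exact absurd hk (hfree k hki)
  · omega
  · exact hik

theorem lt_col_of_forall_ne_gapCol (ht : IsGreedy t) (hi : (i : ℕ) + 1 < lam.part i) {r : Fin n}
    (hir : i < r) (hr : ∀ k ≤ r, t.col k ≠ gapCol t i) : t.col i < t.col r := by
  induction r using WellFoundedLT.induction with
  | _ r ih =>
    obtain ⟨hd₁, hd, hfree⟩ := gapCol_spec ht hi
    have hdr : gapCol t i ≤ t.col r := by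
      refine ht r _ hd₁ (hd.le.trans ((t.le_part i).trans (lam.mono hir.le))) fun k hkr => ?_
      rcases lt_trichotomy k i with hki | rfl | hik
      · exact hfree k hki
      · exact hd.ne'
      · exact (hd.trans (ih k hkr hik fun k' hk' => hr k' (hk'.trans hkr.le))).ne'
    by_contra! hle
    have hne : t.col r ≠ t.col i := fun h => hir.ne' (t.inj h)
    obtain ⟨r', hr', he⟩ := ht.exists_lt_col_eq_of_gapCol_lt
      (lt_of_le_of_ne hdr (hr r le_rfl).symm) (hle.trans (t.le_part i)) hne
    exact (hr'.trans hir).ne (t.inj he)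

def coatom (ht : IsGreedy t) (i : Fin n) (hi : (i : ℕ) + 1 < lam.part i) :
    Placement lam where
  col := Equiv.swap (gapCol t i) (t.col i) ∘ t.col
  inj := (Equiv.injective _).comp t.inj
  pos r := by
    have hd := gapCol_spec ht hi
    have := t.pos r
    simp only [comp_apply, Equiv.swap_apply_def]
    split_ifs <;> omega
  le_part r := by
    have hd := gapCol_spec ht hi
    simp only [comp_apply, Equiv.swap_apply_def]
    split_ifs with h₁ h₂
    · exact (t.le_part i).trans (lam.mono (lt_of_col_eq_gapCol ht hi h₁).le)
    · have := t.le_part r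
      omega
    · exact t.le_part r

def GapBox (t : Placement lam) (i : Fin n) (j q : ℕ) : Prop :=
  (i : ℕ) < j ∧ (∀ r : Fin n, (r : ℕ) < j → t.col r ≠ gapCol t i) ∧
    gapCol t i < q ∧ q ≤ t.col i

theorem col_eq_of_agree_outside_gapBox (ht : IsGreedy t) (hi : (i : ℕ) + 1 < lam.part i)
    {z : Placement lam}
    (hpin : ∀ j q, ¬ GapBox t i j q → prefixCount z.col j q = prefixCount t.col j q)
    {r : Fin n}
    (hrd : t.col r ≠ gapCol t i) (hrc : t.col r ≠ t.col i) : z.col r = t.col r := by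
  refine col_eq_of_prefixCount_eq fun j q hj₁ hj₂ hq₁ hq₂ => hpin j q ?_
  rintro ⟨hij, hfree, -, hqc⟩
  have hir : i < r := lt_of_le_of_ne (by omega) fun h => hrc (h ▸ rfl)
  have := lt_col_of_forall_ne_gapCol ht hi hir fun k hk =>
    (eq_or_lt_of_le hk).elim (fun h => h ▸ hrd) fun h => hfree k (by omega)
  omega

theorem col_eq_gapCol_or_eq_of_agree_outside_gapBox (ht : IsGreedy t)
    (hi : (i : ℕ) + 1 < lam.part i) {z : Placement lam}
    (hpin : ∀ j q, ¬ GapBox t i j q → prefixCount z.col j q = prefixCount t.col j q)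
    {r : Fin n}
    (hr : t.col r = gapCol t i ∨ t.col r = t.col i) :
    z.col r = gapCol t i ∨ z.col r = t.col i := by
  obtain ⟨-, hd, hfree⟩ := gapCol_spec ht hi
  have hle := le_col_iff_of_prefixCount_eq (hpin r (t.col i + 1) (by simp [GapBox]))
    (hpin (r + 1) (t.col i + 1) (by simp [GapBox]))
  have hge := le_col_iff_of_prefixCount_eq (hpin r (gapCol t i) (by simp [GapBox]))
    (hpin (r + 1) (gapCol t i) (by simp [GapBox]))
  by_contra! hne
  obtain ⟨r', hr', he⟩ := ht.exists_lt_col_eq_of_gapCol_lt (m := z.col r) (by omega)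
    (by have := t.le_part i; omega) hne.2
  have hzr' := col_eq_of_agree_outside_gapBox ht hi hpin (hfree r' hr') fun h => hr'.ne (t.inj h)
  obtain rfl := z.inj (hzr'.trans he)
  omega

variable (ht : IsGreedy t) (hi : (i : ℕ) + 1 < lam.part i)

theorem coatom_col (r : Fin n) :
    (coatom ht i hi).col r = Equiv.swap (gapCol t i) (t.col i) (t.col r) := rfl

theorem coatom_col_self : (coatom ht i hi).col i = gapCol t i := by
  rw [coatom_col, Equiv.swap_apply_right]

theorem coatom_col_of_lt {r : Fin n} (hr : r < i) : (coatom ht i hi).col r = t.col r :=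
  Equiv.swap_apply_of_ne_of_ne ((gapCol_spec ht hi).2.2 r hr) fun h => hr.ne (t.inj h)

theorem coatom_ne : coatom ht i hi ≠ t := fun h => by
  have := coatom_col_self ht hi
  rw [h] at this
  exact (gapCol_spec ht hi).2.1.ne' this

open Classical in
theorem prefixCount_coatom (j q : ℕ) :
    prefixCount (coatom ht i hi).col j q + (if GapBox t i j q then 1 else 0) =
      prefixCount t.col j q := by
  obtain ⟨-, hd, -⟩ := gapCol_spec ht hi
  have hswap := prefixCount_swap_comp t.inj hd j q
  have hc₀ : (∃ r : Fin n, (r : ℕ) < j ∧ t.col r = t.col i) ↔ (i : ℕ) < j :=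
    ⟨fun ⟨r, hr, he⟩ => t.inj he ▸ hr, fun h => ⟨i, h, rfl⟩⟩
  have hd_row : (∃ r : Fin n, (r : ℕ) < j ∧ t.col r = gapCol t i) → (i : ℕ) < j :=
    fun ⟨r, hr, he⟩ => lt_trans (lt_of_col_eq_gapCol ht hi he) hr
  simp only [hc₀] at hswap
  change prefixCount (Equiv.swap (gapCol t i) (t.col i) ∘ t.col) j q + _ = _
  simp only [GapBox, ← not_exists]
  split_ifs at hswap ⊢ <;> simp_all

theorem coatom_rle : rle (coatom ht i hi) t := by
  refine rle_iff_prefixCount_le.mpr fun j q => ?_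
  have := prefixCount_coatom ht hi j q
  omega

theorem moveOnRow_coatom : MoveOnRow t (coatom ht i hi) i := by
  obtain ⟨hd₁, hd, -⟩ := gapCol_spec ht hi
  have hfix {r : Fin n} (hrd : t.col r ≠ gapCol t i) (hri : r ≠ i) :
      (coatom ht i hi).col r = t.col r :=
    Equiv.swap_apply_of_ne_of_ne hrd fun h => hri (t.inj h)
  by_cases hocc : ∃ k, t.col k = gapCol t i
  · obtain ⟨k, hk⟩ := hocc
    have hik := lt_of_col_eq_gapCol ht hi hk
    refine Or.inl ⟨k, hik, hk ▸ hd, fun r hir hrk hkr hri => ?_, ?_, ?_,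
      fun r hri hrk => hfix (fun h => hrk (t.inj (h.trans hk.symm))) hri⟩
    · by_contra! hne
      have := lt_col_of_forall_ne_gapCol ht hi (lt_of_le_of_ne hir hne.1.symm)
        fun k' hk' he => hne.2 (le_antisymm hrk (t.inj (he.trans hk.symm) ▸ hk'))
      omega
    · rw [coatom_col_self, hk]
    · rw [coatom_col, hk, Equiv.swap_apply_left]
  · push Not at hocc
    exact Or.inr ⟨gapCol t i, hd₁, hd, hocc, fun m h₁ h₂ =>
      ht.exists_lt_col_eq_of_gapCol_lt h₁ (h₂.le.trans (t.le_part i)) h₂.ne,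
      coatom_col_self ht hi, fun r hri => hfix (hocc r) hri⟩

theorem eq_coatom_of_moveOnRow {x : Placement lam} (hx : MoveOnRow t x i) :
    x = coatom ht i hi := by
  obtain ⟨-, hd, hfree⟩ := gapCol_spec ht hi
  refine Placement.ext_col (funext fun r => ?_)
  rw [coatom_col]
  rcases hx with ⟨k, hik, hki, hrect, hxi, hxk, hxo⟩ |
    ⟨m, -, hm, hmfree, hbetween, hxi, hxo⟩
  · have hk : t.col k = gapCol t i := by
      refine le_antisymm (le_gapCol (fun r hr he => (hr.trans hik).ne (t.inj he)) hki) ?_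
      by_contra! hlt
      by_cases hocc : ∀ k' ≤ k, t.col k' ≠ gapCol t i
      · have := lt_col_of_forall_ne_gapCol ht hi hik hocc
        omega
      push Not at hocc
      obtain ⟨k', hk'k, hk'⟩ := hocc
      rcases hrect k' (lt_of_col_eq_gapCol ht hi hk').le hk'k (by omega) (by omega) with rfl | rfl
        <;> omega
    rcases eq_or_ne r i with rfl | hri
    · rw [hxi, hk, Equiv.swap_apply_right]
    rcases eq_or_ne r k with rfl | hrk
    · rw [hxk, hk, Equiv.swap_apply_left]
    · rw [hxo r hri hrk, Equiv.swap_apply_of_ne_of_ne (fun h => hrk (t.inj (h.trans hk.symm)))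
        fun h => hri (t.inj h)]
  · have hmd : m = gapCol t i := by
      refine le_antisymm (le_gapCol (fun r _ => hmfree r) hm) (not_lt.mp fun hlt => ?_)
      obtain ⟨r, hr, he⟩ := hbetween _ hlt hd
      exact hfree r hr he
    rcases eq_or_ne r i with rfl | hri
    · rw [hxi, hmd, Equiv.swap_apply_right]
    · rw [hxo r hri, Equiv.swap_apply_of_ne_of_ne (hmd ▸ hmfree r) fun h => hri (t.inj h)]

theorem rle_coatom_of_rle {x : Placement lam} (hxt : rle x t) (hlow : ∀ r < i, x.col r = t.col r)
    (hxi : x.col i < t.col i) : rle x (coatom ht i hi) := by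
  have hxd : x.col i ≤ gapCol t i :=
    le_gapCol (fun r hr he => hr.ne (x.inj ((hlow r hr).trans he))) hxi
  rw [rle_iff_prefixCount_le] at hxt ⊢
  intro j q
  have hc := prefixCount_coatom ht hi j q
  split_ifs at hc with hbox
  · obtain ⟨hij, hfree, hdq, hqc⟩ := hbox
    have hsub : ({r | (r : ℕ) < j ∧ q ≤ x.col r} : Finset (Fin n)) ⊆
        ({r | (r : ℕ) < j ∧ q ≤ t.col r} : Finset (Fin n)).erase i := by
      intro r hr
      simp only [mem_filter, mem_univ, true_and, mem_erase] at hr ⊢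
      refine ⟨fun h => by subst h; omega, hr.1, ?_⟩
      rcases lt_trichotomy r i with hri | rfl | hir
      · exact hlow r hri ▸ hr.2
      · omega
      · have := lt_col_of_forall_ne_gapCol ht hi hir fun k hk => hfree k (by omega)
        omega
    have hcard := card_le_card hsub
    rw [card_erase_of_mem (by simp [hij, hqc])] at hcard
    unfold prefixCount at hc ⊢
    omega
  · have := hxt j q
    omega

theorem coatom_covers : rcovers (coatom ht i hi) t := by
  refine ⟨coatom_rle ht hi, coatom_ne ht hi, fun z hcz hzt => ?_⟩
  obtain ⟨-, hd, -⟩ := gapCol_spec ht hi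
  have hpin (j q : ℕ) (hbox : ¬ GapBox t i j q) :
      prefixCount z.col j q = prefixCount t.col j q := by
    have hc := prefixCount_coatom ht hi j q
    rw [if_neg hbox, add_zero] at hc
    have := rle_iff_prefixCount_le.mp hcz j q
    have := rle_iff_prefixCount_le.mp hzt j q
    omega
  have hfix {r : Fin n} := col_eq_of_agree_outside_gapBox ht hi hpin (r := r)
  have hmove {r : Fin n} := col_eq_gapCol_or_eq_of_agree_outside_gapBox ht hi hpin (r := r)
  have hrow_d {r : Fin n} (hr : t.col r = gapCol t i) : r ≠ i := fun h => by subst h; omega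
  rcases hmove (Or.inr rfl) with hzi | hzi
  · refine Or.inl (Placement.ext_col (funext fun r => ?_))
    rw [coatom_col, Equiv.swap_apply_def]
    split_ifs with h₁ h₂
    · exact (hmove (Or.inl h₁)).resolve_left fun h => hrow_d h₁ (z.inj (h.trans hzi.symm))
    · rw [t.inj h₂, hzi]
    · exact hfix h₁ h₂
  · refine Or.inr (Placement.ext_col (funext fun r => ?_))
    by_cases h₁ : t.col r = gapCol t i
    · rw [h₁]
      exact (hmove (Or.inl h₁)).resolve_right fun h => hrow_d h₁ (z.inj (h.trans hzi.symm))
    by_cases h₂ : t.col r = t.col i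
    · rw [t.inj h₂, hzi]
    · exact hfix h₁ h₂

theorem exists_coatom_eq {x : Placement lam} (hx : rcovers x t) :
    ∃ i : Fin n, ∃ hi : (i : ℕ) + 1 < lam.part i, coatom ht i hi = x := by
  obtain ⟨hxt, hne, hcov⟩ := hx
  obtain ⟨i, hxi, hlow⟩ := exists_first_col_ne hne
  have hlt : x.col i < t.col i := lt_of_le_of_ne (col_le_of_rle hxt hlow) hxi
  have hi : (i : ℕ) + 1 < lam.part i := (exists_freeBelow_iff ht i).mp
    ⟨x.col i, x.pos i, hlt, fun r hr he => hr.ne (x.inj ((hlow r hr).trans he))⟩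
  refine ⟨i, hi, ?_⟩
  rcases hcov _ (rle_coatom_of_rle ht hi hxt hlow hlt) (coatom_rle ht hi) with h | h
  · exact h
  · exact absurd h (coatom_ne ht hi)

theorem coatom_injective {i i' : Fin n} (hi : (i : ℕ) + 1 < lam.part i)
    (hi' : (i' : ℕ) + 1 < lam.part i') (h : coatom ht i hi = coatom ht i' hi') : i = i' := by
  have key {a b : Fin n} (ha : (a : ℕ) + 1 < lam.part a) (hb : (b : ℕ) + 1 < lam.part b)
      (hab : a < b) : coatom ht a ha ≠ coatom ht b hb := fun h => by
    have := congrArg (Placement.col · a) h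
    simp only [coatom_col_self, coatom_col_of_lt ht hb hab] at this
    exact (gapCol_spec ht ha).2.1.ne' this.symm
  rcases lt_trichotomy i i' with hlt | heq | hgt
  · exact absurd h (key hi hi' hlt)
  · exact heq
  · exact absurd h.symm (key hi' hi hgt)

end Greedy

/-- For each row `i` with `λ_i > i` (1-based) there is exactly one element
obtained from `1̂` by a single switch or push move on the rook in row `i`, and it is a coatom;
for rows with `λ_i = i` no such move exists; the resulting map from rows with `λ_i > i` to
coatoms is a bijection. -/
theorem coatom_row_bijection {n : ℕ} (lam : Partition n) (t : Placement lam)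
    (ht : IsGreedy t) :
    (∀ i : Fin n, (i : ℕ) + 1 < lam.part i →
      (∃! c : Placement lam, MoveOnRow t c i) ∧
      ∀ c : Placement lam, MoveOnRow t c i → rcovers c t) ∧
    (∀ i : Fin n, lam.part i = (i : ℕ) + 1 → ¬ ∃ c : Placement lam, MoveOnRow t c i) ∧
    (∃ f : {i : Fin n // (i : ℕ) + 1 < lam.part i} → {c : Placement lam // rcovers c t},
      Function.Bijective f ∧ ∀ i, MoveOnRow t (f i).1 i.1) := by
  refine ⟨fun i hi => ⟨⟨coatom ht i hi, moveOnRow_coatom ht hi,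
      fun x hx => eq_coatom_of_moveOnRow ht hi hx⟩,
      fun c hc => eq_coatom_of_moveOnRow ht hi hc ▸ coatom_covers ht hi⟩,
    fun i hi ⟨c, hc⟩ => not_moveOnRow ht hi hc,
    ⟨fun i => ⟨coatom ht i.1 i.2, coatom_covers ht i.2⟩, ⟨?_, ?_⟩,
      fun i => moveOnRow_coatom ht i.2⟩⟩
  · rintro ⟨i, hi⟩ ⟨i', hi'⟩ h
    exact Subtype.ext (coatom_injective ht hi hi' (congrArg Subtype.val h))
  · rintro ⟨x, hx⟩
    obtain ⟨i, hi, rfl⟩ := exists_coatom_eq ht hx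
    exact ⟨⟨i, hi⟩, rfl⟩

end RookPoset
end
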